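/- In the real Clifford algebra Cl(15,0), the element ψ = (7·e_{123456789ABCDEF} - Φ)/8 satisfies ψ² = -1, where Φ = Φ_A + Φ_O + Φ_P is the 7-form calibration with Φ_A = e1234567, Φ_O = e_{12389AB} + e_{14589CD} + e_{16789EF} + e_{2468ACE} + e_{2578ADF} + e_{3478BCF} + e_{3568BDE}, and Φ_P = e_{123CDEF} + e_{145ABEF} + e_{167ABCD} + e_{2469BDF} + e_{2579BCE} + e_{3479ADE} + e_{3569ACF}. -/

import Mathlib

/-!
Generators that square to `1` and pairwise anticommute turn every word into `±` a strictly
increasing word. So a square of an integer combination of words is computed by multiplying out,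
reducing each word to this normal form and collecting terms; for `7 ω - Φ` the kernel carries this
out and finds `(7 ω - Φ)² = -64`.
-/

noncomputable def Q15 : QuadraticForm ℝ (Fin 15 → ℝ) :=
  QuadraticMap.weightedSumSquares ℝ (fun _ : Fin 15 => (1 : ℝ))

noncomputable def e15 (i : Fin 15) : CliffordAlgebra Q15 :=
  CliffordAlgebra.ι Q15 (Pi.single i 1)

/-- Product of generators with the given (0-based) indices;
hexadecimal index k of the paper corresponds to k-1 here. -/
noncomputable def p15 (l : List (Fin 15)) : CliffordAlgebra Q15 := (l.map e15).prod

/-- Φ_A = e1234567. -/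
noncomputable def ΦA : CliffordAlgebra Q15 := p15 [0,1,2,3,4,5,6]

/-- Φ_O = e_{12389AB} + e_{14589CD} + e_{16789EF} + e_{2468ACE} + e_{2578ADF}
  + e_{3478BCF} + e_{3568BDE}. -/
noncomputable def ΦO : CliffordAlgebra Q15 :=
  p15 [0,1,2,7,8,9,10] + p15 [0,3,4,7,8,11,12] + p15 [0,5,6,7,8,13,14]
    + p15 [1,3,5,7,9,11,13] + p15 [1,4,6,7,9,12,14] + p15 [2,3,6,7,10,11,14]
    + p15 [2,4,5,7,10,12,13]

/-- Φ_P = e_{123CDEF} + e_{145ABEF} + e_{167ABCD} + e_{2469BDF} + e_{2579BCE}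
  + e_{3479ADE} + e_{3569ACF}. -/
noncomputable def ΦP : CliffordAlgebra Q15 :=
  p15 [0,1,2,11,12,13,14] + p15 [0,3,4,9,10,13,14] + p15 [0,5,6,9,10,11,12]
    + p15 [1,3,5,8,10,12,14] + p15 [1,4,6,8,10,11,13] + p15 [2,3,6,8,9,12,13]
    + p15 [2,4,5,8,9,11,14]

/-- The pseudoscalar e_{123456789ABCDEF}. -/
noncomputable def ω15 : CliffordAlgebra Q15 :=
  p15 [0,1,2,3,4,5,6,7,8,9,10,11,12,13,14]

namespace CliffordAlgebra

variable {R M I : Type*} [CommRing R] [AddCommGroup M] [Module R M]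

section Words

variable (Q : QuadraticForm R M) (v : I → M)

def wordProd (l : List I) : CliffordAlgebra Q := (l.map fun i => ι Q (v i)).prod

@[simp] theorem wordProd_nil : wordProd Q v [] = 1 := rfl

@[simp] theorem wordProd_cons (i : I) (l : List I) :
    wordProd Q v (i :: l) = ι Q (v i) * wordProd Q v l := List.prod_cons

theorem wordProd_append (l l' : List I) :
    wordProd Q v (l ++ l') = wordProd Q v l * wordProd Q v l' := by
  simp [wordProd]

end Words

abbrev Combo (I : Type*) := List (ℤ × List I)

section NormalForm

variable [LinearOrder I]

-- Inserting into a strictly increasing word keeps it strictly increasing, so that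
-- `normalizeCombo` merges all terms on the same basis blade.
def insertGen (i : I) : List I → ℤ × List I
  | [] => (1, [i])
  | j :: l =>
    if i = j then (1, l)
    else if i < j then (1, i :: j :: l)
    else (-(insertGen i l).1, j :: (insertGen i l).2)

def normalizeWord : List I → ℤ × List I
  | [] => (1, [])
  | i :: l =>
    ((normalizeWord l).1 * (insertGen i (normalizeWord l).2).1,
      (insertGen i (normalizeWord l).2).2)

def addTerm (t : ℤ × List I) : Combo I → Combo I
  | [] => [t]
  | (d, w) :: c =>
    if t.2 = w then (if t.1 + d = 0 then c else (t.1 + d, w) :: c)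
    else (d, w) :: addTerm t c

def normalizeCombo (c : Combo I) : Combo I :=
  (c.map fun t => (t.1 * (normalizeWord t.2).1, (normalizeWord t.2).2)).foldr addTerm []

end NormalForm

def mulCombo (c c' : Combo I) : Combo I :=
  c.flatMap fun t => c'.map fun t' => (t.1 * t'.1, t.2 ++ t'.2)

variable {Q : QuadraticForm R M} {v : I → M}

variable (Q v) in
def evalCombo (c : Combo I) : CliffordAlgebra Q :=
  (c.map fun t => t.1 • wordProd Q v t.2).sum

@[simp] theorem evalCombo_nil : evalCombo Q v [] = 0 := rfl

@[simp] theorem evalCombo_cons (t : ℤ × List I) (c : Combo I) :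
    evalCombo Q v (t :: c) = t.1 • wordProd Q v t.2 + evalCombo Q v c := List.sum_cons

theorem evalCombo_append (c c' : Combo I) :
    evalCombo Q v (c ++ c') = evalCombo Q v c + evalCombo Q v c' := by
  simp [evalCombo]

theorem evalCombo_map_mulTerm (t : ℤ × List I) (c : Combo I) :
    evalCombo Q v (c.map fun t' => (t.1 * t'.1, t.2 ++ t'.2)) =
      (t.1 • wordProd Q v t.2) * evalCombo Q v c := by
  induction c with
  | nil => simp
  | cons t' c ih =>
    rw [List.map_cons, evalCombo_cons, evalCombo_cons, ih, wordProd_append, mul_add,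
      smul_mul_smul]

theorem evalCombo_mulCombo (c c' : Combo I) :
    evalCombo Q v (mulCombo c c') = evalCombo Q v c * evalCombo Q v c' := by
  induction c with
  | nil => simp [mulCombo]
  | cons t c ih =>
    rw [mulCombo, List.flatMap_cons, evalCombo_append, evalCombo_map_mulTerm, ← mulCombo, ih,
      evalCombo_cons, add_mul]

theorem evalCombo_addTerm [LinearOrder I] (t : ℤ × List I) (c : Combo I) :
    evalCombo Q v (addTerm t c) = t.1 • wordProd Q v t.2 + evalCombo Q v c := by
  induction c with
  | nil => simp [addTerm]
  | cons s c ih =>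
    obtain ⟨d, w⟩ := s
    by_cases hw : t.2 = w
    · by_cases hd : t.1 + d = 0
      · simp only [addTerm, hw, hd, if_true, evalCombo_cons, ← add_assoc, ← add_smul, zero_smul,
          zero_add]
      · simp [addTerm, hw, hd, add_smul, add_assoc]
    · simp only [addTerm, hw, if_false, evalCombo_cons, ih, add_left_comm]

section Orthonormal

variable [LinearOrder I]

theorem ι_mul_wordProd_eq_insertGen (hv : ∀ i, Q (v i) = 1)
    (hv' : Pairwise fun i j => Q.IsOrtho (v i) (v j)) (i : I) (l : List I) :
    ι Q (v i) * wordProd Q v l = (insertGen i l).1 • wordProd Q v (insertGen i l).2 := by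
  induction l with
  | nil => simp [insertGen]
  | cons j l ih =>
    by_cases hij : i = j
    · subst hij
      simp [insertGen, ← mul_assoc, ι_sq_scalar, hv]
    · by_cases hlt : i < j
      · simp [insertGen, hij, hlt]
      · simp only [insertGen, hij, hlt, if_false, wordProd_cons,
          ι_mul_ι_mul_of_isOrtho _ (hv' hij), ih, mul_smul_comm, neg_smul]

theorem wordProd_eq_normalizeWord (hv : ∀ i, Q (v i) = 1)
    (hv' : Pairwise fun i j => Q.IsOrtho (v i) (v j)) (l : List I) :
    wordProd Q v l = (normalizeWord l).1 • wordProd Q v (normalizeWord l).2 := by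
  induction l with
  | nil => simp [normalizeWord]
  | cons i l ih =>
    rw [wordProd_cons, ih, mul_smul_comm, ι_mul_wordProd_eq_insertGen hv hv', smul_smul,
      normalizeWord]

theorem evalCombo_normalizeCombo (hv : ∀ i, Q (v i) = 1)
    (hv' : Pairwise fun i j => Q.IsOrtho (v i) (v j)) (c : Combo I) :
    evalCombo Q v (normalizeCombo c) = evalCombo Q v c := by
  induction c with
  | nil => rfl
  | cons t c ih =>
    rw [normalizeCombo, List.map_cons, List.foldr_cons, evalCombo_addTerm, ← normalizeCombo, ih,
      evalCombo_cons, mul_smul, ← wordProd_eq_normalizeWord hv hv']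

end Orthonormal

end CliffordAlgebra

theorem QuadraticMap.weightedSumSquares_single {R ι : Type*} [CommRing R] [Fintype ι]
    [DecidableEq ι] (w : ι → R) (i : ι) :
    weightedSumSquares R w (Pi.single i 1) = w i := by
  simp [weightedSumSquares_apply, Pi.single_apply]

theorem QuadraticMap.isOrtho_weightedSumSquares_single {R ι : Type*} [CommRing R] [Fintype ι]
    [DecidableEq ι] (w : ι → R) :
    Pairwise fun i j => (weightedSumSquares R w).IsOrtho (Pi.single i 1) (Pi.single j 1) := by
  intro i j hij
  simp [isOrtho_def, weightedSumSquares_apply, Pi.single_apply, mul_add, Finset.sum_add_distrib,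
    hij, hij.symm]

open CliffordAlgebra

theorem p15_eq_wordProd (l : List (Fin 15)) : p15 l = wordProd Q15 (Pi.single · 1) l := rfl

def eightψCombo : Combo (Fin 15) :=
  [(7, [0,1,2,3,4,5,6,7,8,9,10,11,12,13,14]),
   (-1, [0,1,2,3,4,5,6]),
   (-1, [0,1,2,7,8,9,10]), (-1, [0,3,4,7,8,11,12]), (-1, [0,5,6,7,8,13,14]),
   (-1, [1,3,5,7,9,11,13]), (-1, [1,4,6,7,9,12,14]), (-1, [2,3,6,7,10,11,14]),
   (-1, [2,4,5,7,10,12,13]),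
   (-1, [0,1,2,11,12,13,14]), (-1, [0,3,4,9,10,13,14]), (-1, [0,5,6,9,10,11,12]),
   (-1, [1,3,5,8,10,12,14]), (-1, [1,4,6,8,10,11,13]), (-1, [2,3,6,8,9,12,13]),
   (-1, [2,4,5,8,9,11,14])]

theorem evalCombo_eightψCombo :
    evalCombo Q15 (Pi.single · 1) eightψCombo = 7 * ω15 - (ΦA + ΦO + ΦP) := by
  simp only [eightψCombo, evalCombo_cons, evalCombo_nil, ← p15_eq_wordProd, ΦA, ΦO, ΦP, ω15,
    neg_smul, one_smul, add_zero]
  rw [zsmul_eq_mul, Int.cast_ofNat]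
  abel

set_option maxRecDepth 100000 in
theorem normalizeCombo_mulCombo_eightψCombo :
    normalizeCombo (mulCombo eightψCombo eightψCombo) = [(-64, [])] := by
  decide

theorem seven_ω15_sub_Φ_sq : (7 * ω15 - (ΦA + ΦO + ΦP)) ^ 2 = -64 := by
  rw [← evalCombo_eightψCombo, sq, ← evalCombo_mulCombo,
    ← evalCombo_normalizeCombo (fun i => QuadraticMap.weightedSumSquares_single _ i)
      (QuadraticMap.isOrtho_weightedSumSquares_single _), normalizeCombo_mulCombo_eightψCombo]
  simp

/-- ψ = (7·e_{123456789ABCDEF} - Φ)/8 satisfies ψ² = -1, for Φ = Φ_A + Φ_O + Φ_P. -/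
theorem stmt16 : ((8 : ℝ)⁻¹ • (7 * ω15 - (ΦA + ΦO + ΦP))) ^ 2 = -1 := by
  rw [smul_pow, seven_ω15_sub_Φ_sq, ← map_ofNat (algebraMap ℝ (CliffordAlgebra Q15)) 64,
    ← map_neg, Algebra.smul_def, ← map_mul]
  norm_num
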